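/- arXiv:2501.19071 — 6 statements merged into one kernel-verified Lean document; each statement's English description precedes it below -/
import Mathlib

section
/- Reverse Cauchy–Schwarz inequality in Minkowski space: for every pair of future-directed causal vectors v, w ∈ ℝ^{n+1} one has η(v,w) ≥ √(η(v,v) · η(w,w)). Moreover, if v and w are both future-directed timelike and equality holds, then w = c·v for some real c > 0. -/
/-! Split a vector into its time coordinate `a` and its spatial part `x` in Euclidean space, so that
`η(v,w) = a b - ⟪x, y⟫` and causality means `‖x‖ ≤ a`. Euclidean Cauchy–Schwarz gives
`⟪x, y⟫ ≤ ‖x‖ ‖y‖`, and the identity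
`(a b - p q)² - (a² - p²)(b² - q²) = (a q - b p)²` gives `√((a² - p²)(b² - q²)) ≤ a b - p q`.
Equality forces equality in both steps: `x, y` point the same way and `a ‖y‖ = b ‖x‖`,
hence `y = (b / a) x`. -/

open scoped RealInnerProductSpace

/-- The Minkowski bilinear form on `ℝ^{n+1}`. -/
def minkEta (n : ℕ) (v w : Fin (n + 1) → ℝ) : ℝ :=
  v 0 * w 0 - ∑ i : Fin n, v i.succ * w i.succ

lemma sq_mul_sub_mul_sub_mul_sq_sub_sq (a b p q : ℝ) :
    (a * b - p * q) ^ 2 - (a ^ 2 - p ^ 2) * (b ^ 2 - q ^ 2) = (a * q - b * p) ^ 2 := by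
  ring

lemma sqrt_mul_sq_sub_sq_le {a b p q : ℝ} (hp : 0 ≤ p) (hpa : p ≤ a) (hq : 0 ≤ q) (hqb : q ≤ b) :
    √((a ^ 2 - p ^ 2) * (b ^ 2 - q ^ 2)) ≤ a * b - p * q := by
  refine Real.sqrt_le_iff.mpr ⟨sub_nonneg.mpr (mul_le_mul hpa hqb hq (hp.trans hpa)), ?_⟩
  nlinarith [sq_mul_sub_mul_sub_mul_sq_sub_sq a b p q, sq_nonneg (a * q - b * p)]

lemma mul_eq_mul_of_mul_sub_mul_eq_sqrt {a b p q : ℝ} (hp : 0 ≤ p) (hpa : p ≤ a) (hq : 0 ≤ q)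
    (hqb : q ≤ b) (h : a * b - p * q = √((a ^ 2 - p ^ 2) * (b ^ 2 - q ^ 2))) :
    a * q = b * p := by
  have hprod : 0 ≤ (a ^ 2 - p ^ 2) * (b ^ 2 - q ^ 2) :=
    mul_nonneg (by nlinarith) (by nlinarith)
  have hsq : (a * b - p * q) ^ 2 = (a ^ 2 - p ^ 2) * (b ^ 2 - q ^ 2) := by
    rw [h, Real.sq_sqrt hprod]
  have : (a * q - b * p) ^ 2 = 0 := by
    rw [← sq_mul_sub_mul_sub_mul_sq_sub_sq, hsq, sub_self]
  exact sub_eq_zero.mp (pow_eq_zero_iff two_ne_zero |>.mp this)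

section InnerProductSpace

variable {E : Type*} [NormedAddCommGroup E] [InnerProductSpace ℝ E]

lemma sqrt_mul_sq_sub_norm_sq_le_mul_sub_inner {a b : ℝ} {x y : E} (hx : ‖x‖ ≤ a) (hy : ‖y‖ ≤ b) :
    √((a ^ 2 - ‖x‖ ^ 2) * (b ^ 2 - ‖y‖ ^ 2)) ≤ a * b - ⟪x, y⟫ :=
  (sqrt_mul_sq_sub_sq_le (norm_nonneg x) hx (norm_nonneg y) hy).trans
    (by linarith [real_inner_le_norm x y])

lemma eq_div_smul_of_mul_sub_inner_eq_sqrt {a b : ℝ} {x y : E} (ha : 0 < a) (hx : ‖x‖ ≤ a)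
    (hy : ‖y‖ ≤ b) (h : a * b - ⟪x, y⟫ = √((a ^ 2 - ‖x‖ ^ 2) * (b ^ 2 - ‖y‖ ^ 2))) :
    y = (b / a) • x := by
  have hle := sqrt_mul_sq_sub_sq_le (norm_nonneg x) hx (norm_nonneg y) hy
  have hinner : ⟪x, y⟫ = ‖x‖ * ‖y‖ := by linarith [real_inner_le_norm x y]
  have hnorm : a * ‖y‖ = b * ‖x‖ :=
    mul_eq_mul_of_mul_sub_mul_eq_sqrt (norm_nonneg x) hx (norm_nonneg y) hy (by linarith)
  have hsame : ‖y‖ • x = ‖x‖ • y := inner_eq_norm_mul_iff_real.mp hinner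
  rcases (norm_nonneg x).eq_or_lt with hx0 | hx0
  · have hy0 : ‖y‖ = 0 := by nlinarith
    rw [norm_eq_zero.mp hy0, norm_eq_zero.mp hx0.symm, smul_zero]
  · have hyx : ‖y‖ = (b / a) * ‖x‖ := by field_simp; linarith
    apply smul_right_injective E hx0.ne'
    change ‖x‖ • y = ‖x‖ • (b / a) • x
    rw [← hsame, hyx, smul_smul, mul_comm]

end InnerProductSpace

section Minkowski

variable {n : ℕ}

def minkSpatial (v : Fin (n + 1) → ℝ) : EuclideanSpace ℝ (Fin n) :=
  WithLp.toLp 2 (Fin.tail v)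

lemma minkEta_eq_sub_inner (v w : Fin (n + 1) → ℝ) :
    minkEta n v w = v 0 * w 0 - ⟪minkSpatial v, minkSpatial w⟫ := by
  simp [minkEta, minkSpatial, PiLp.inner_apply, Fin.tail, mul_comm]

lemma minkEta_self (v : Fin (n + 1) → ℝ) : minkEta n v v = v 0 ^ 2 - ‖minkSpatial v‖ ^ 2 := by
  rw [minkEta_eq_sub_inner, real_inner_self_eq_norm_sq, ← sq]

lemma norm_minkSpatial_le {v : Fin (n + 1) → ℝ} (hv0 : 0 < v 0) (hv : 0 ≤ minkEta n v v) :
    ‖minkSpatial v‖ ≤ v 0 := by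
  rw [minkEta_self] at hv
  nlinarith [norm_nonneg (minkSpatial v)]

lemma eq_smul_of_minkSpatial_eq_smul {v w : Fin (n + 1) → ℝ} {c : ℝ} (h0 : w 0 = c * v 0)
    (hs : minkSpatial w = c • minkSpatial v) : w = c • v := by
  funext i
  refine Fin.cases h0 (fun j => ?_) i
  simpa [minkSpatial, Fin.tail] using congrArg (· j) hs

end Minkowski

theorem minkowski_reverse_cauchy_schwarz_general (n : ℕ)
    (v w : Fin (n + 1) → ℝ)
    (hv0 : 0 < v 0) (hv : 0 ≤ minkEta n v v)
    (hw0 : 0 < w 0) (hw : 0 ≤ minkEta n w w) :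
    minkEta n v w ≥ Real.sqrt (minkEta n v v * minkEta n w w) ∧
      (0 < minkEta n v v → 0 < minkEta n w w →
        minkEta n v w = Real.sqrt (minkEta n v v * minkEta n w w) →
          ∃ c : ℝ, 0 < c ∧ w = c • v) := by
  have hx := norm_minkSpatial_le hv0 hv
  have hy := norm_minkSpatial_le hw0 hw
  rw [minkEta_self v, minkEta_self w, minkEta_eq_sub_inner v w]
  refine ⟨sqrt_mul_sq_sub_norm_sq_le_mul_sub_inner hx hy, fun _ _ h => ?_⟩
  refine ⟨w 0 / v 0, div_pos hw0 hv0, eq_smul_of_minkSpatial_eq_smul ?_ ?_⟩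
  · field_simp
  · exact eq_div_smul_of_mul_sub_inner_eq_sqrt hv0 hx hy h

/-- Reverse Cauchy–Schwarz inequality in Minkowski space: for future-directed causal
vectors `v, w` one has `η(v,w) ≥ √(η(v,v)·η(w,w))`; if moreover `v, w` are
future-directed timelike and equality holds, then `w = c • v` for some `c > 0`. -/
theorem minkowski_reverse_cauchy_schwarz (n : ℕ) (hn : 1 ≤ n)
    (v w : Fin (n + 1) → ℝ)
    (hv0 : 0 < v 0) (hv : 0 ≤ minkEta n v v)
    (hw0 : 0 < w 0) (hw : 0 ≤ minkEta n w w) :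
    minkEta n v w ≥ Real.sqrt (minkEta n v v * minkEta n w w) ∧
      (0 < minkEta n v v → 0 < minkEta n w w →
        minkEta n v w = Real.sqrt (minkEta n v v * minkEta n w w) →
          ∃ c : ℝ, 0 < c ∧ w = c • v) :=
  minkowski_reverse_cauchy_schwarz_general n v w hv0 hv hw0 hw
end

section
/- Reverse Young inequality in Minkowski space with Legendre equality: let p, q be nonzero real numbers with p < 1 and 1/p + 1/q = 1. For all future-directed timelike vectors v, w ∈ ℝ^{n+1} one has η(v,w) ≥ |v|^p/p + |w|^q/q, and equality holds if and only if w = |v|^(p−2) · v. -/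
/-- The Lorentzian norm `|v| = √(η(v,v))` of a (causal) vector. -/
noncomputable def minkNorm (n : ℕ) (v : Fin (n + 1) → ℝ) : ℝ :=
  Real.sqrt (minkEta n v v)

/-!
Two inequalities are chained: `η(v,w) ≥ |v| |w|` and `|v| |w| ≥ |v|^p/p + |w|^q/q`.
The first is the reverse Cauchy–Schwarz inequality: subtracting from `w` its `η`-projection
onto the timelike `v` leaves a component `η`-orthogonal to `v`, which is spacelike (by the
Euclidean Cauchy–Schwarz inequality on the spatial parts), and equality holds exactly when `w`
is a positive multiple of `v`. The second is the reverse Young inequality for reals; for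
`p < 0 < q < 1` it is the weighted AM–GM inequality with weights `q, 1 - q` applied to `ab` and
`a^p`, whose weighted geometric mean is `b^q`, with equality iff `b = a^(p-1)`. Together the
two equality conditions say `w = |v|^(p-2) v`.
-/

namespace Real

variable {a b p q : ℝ}

lemma pos_and_lt_one_of_neg_of_one_div_add_one_div (hp : p < 0) (hpq : 1 / p + 1 / q = 1) :
    0 < q ∧ q < 1 := by
  have h : 1 < 1 / q := by linarith [one_div_neg.2 hp]
  have hq : 0 < q := one_div_pos.1 (one_pos.trans h)
  exact ⟨hq, (one_lt_div hq).1 h⟩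

lemma mul_eq_add_of_one_div_add_one_div (hp : p ≠ 0) (hq : q ≠ 0) (hpq : 1 / p + 1 / q = 1) :
    p * q = p + q := by
  field_simp at hpq
  linarith

theorem reverse_young_of_neg (ha : 0 < a) (hb : 0 < b) (hp : p < 0) (hpq : 1 / p + 1 / q = 1) :
    a ^ p / p + b ^ q / q ≤ a * b ∧ (a ^ p / p + b ^ q / q = a * b ↔ b = a ^ (p - 1)) := by
  obtain ⟨hq0, hq1⟩ := pos_and_lt_one_of_neg_of_one_div_add_one_div hp hpq
  have hp_ne : p ≠ 0 := hp.ne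
  have hconj := mul_eq_add_of_one_div_add_one_div hp_ne hq0.ne' hpq
  have hgeom : (a * b) ^ q * (a ^ p) ^ (1 - q) = b ^ q := by
    rw [mul_rpow ha.le hb.le, ← rpow_mul ha.le, mul_right_comm, ← rpow_add ha,
      show q + p * (1 - q) = 0 by linarith, rpow_zero, one_mul]
  have hgap : a ^ p / p + b ^ q / q - a * b
      = ((a * b) ^ q * (a ^ p) ^ (1 - q) - (q * (a * b) + (1 - q) * a ^ p)) / q := by
    rw [hgeom]
    field_simp
    linear_combination (-a ^ p) * hconj
  have hamgm := geom_mean_le_arith_mean2_weighted hq0.le (sub_nonneg.2 hq1.le)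
    (by positivity : 0 ≤ a * b) (by positivity : 0 ≤ a ^ p) (add_sub_cancel q 1)
  have hamgm_eq := geom_mean_eq_arith_mean2_weighted_iff_of_pos hq0 (sub_pos.2 hq1)
    (by positivity : 0 ≤ a * b) (by positivity : 0 ≤ a ^ p) (add_sub_cancel q 1)
  constructor
  · have : a ^ p / p + b ^ q / q - a * b ≤ 0 := by
      rw [hgap]
      exact div_nonpos_of_nonpos_of_nonneg (by linarith) hq0.le
    linarith
  · rw [← sub_eq_zero, hgap, div_eq_zero_iff, or_iff_left hq0.ne', sub_eq_zero, hamgm_eq,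
      rpow_sub_one ha.ne', eq_div_iff ha.ne', mul_comm]

theorem reverse_young (ha : 0 < a) (hb : 0 < b) (hp0 : p ≠ 0) (hp1 : p < 1)
    (hpq : 1 / p + 1 / q = 1) :
    a ^ p / p + b ^ q / q ≤ a * b ∧ (a ^ p / p + b ^ q / q = a * b ↔ b = a ^ (p - 1)) := by
  rcases hp0.lt_or_gt with hp | hp
  · exact reverse_young_of_neg ha hb hp hpq
  have hq : q < 0 := one_div_neg.1 (by linarith [one_lt_one_div hp hp1])
  obtain ⟨hle, heq⟩ := reverse_young_of_neg hb ha hq (by linarith : 1 / q + 1 / p = 1)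
  have hconj : (q - 1)⁻¹ = p - 1 := by
    refine inv_eq_of_mul_eq_one_left ?_
    linear_combination mul_eq_add_of_one_div_add_one_div hp0 hq.ne hpq
  rw [add_comm, mul_comm, heq, ← hconj, eq_rpow_inv hb.le ha.le (by linarith : q - 1 < 0).ne,
    eq_comm]
  exact ⟨hle, Iff.rfl⟩

end Real

section Minkowski

variable {n : ℕ} {u v w : Fin (n + 1) → ℝ}

lemma minkEta_comm (v w : Fin (n + 1) → ℝ) : minkEta n v w = minkEta n w v := by
  simp only [minkEta, mul_comm]

lemma minkEta_sub_right (u v w : Fin (n + 1) → ℝ) :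
    minkEta n u (v - w) = minkEta n u v - minkEta n u w := by
  simp only [minkEta, Pi.sub_apply, mul_sub, Finset.sum_sub_distrib]
  ring

lemma minkEta_smul_right (c : ℝ) (v w : Fin (n + 1) → ℝ) :
    minkEta n v (c • w) = c * minkEta n v w := by
  simp only [minkEta, Pi.smul_apply, smul_eq_mul, mul_sub, Finset.mul_sum]
  ring_nf

lemma minkNorm_pos (hv : 0 < minkEta n v v) : 0 < minkNorm n v :=
  Real.sqrt_pos.2 hv

lemma minkNorm_smul (c : ℝ) (v : Fin (n + 1) → ℝ) :
    minkNorm n (c • v) = |c| * minkNorm n v := by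
  rw [minkNorm, minkEta_smul_right, minkEta_comm, minkEta_smul_right, ← mul_assoc, ← sq,
    Real.sqrt_mul (sq_nonneg c), Real.sqrt_sq_eq_abs, minkNorm]

lemma sq_sum_succ_mul_le (v w : Fin (n + 1) → ℝ) :
    (∑ i : Fin n, v i.succ * w i.succ) ^ 2
      ≤ (∑ i : Fin n, v i.succ * v i.succ) * ∑ i : Fin n, w i.succ * w i.succ := by
  simpa only [sq] using
    Finset.sum_mul_sq_le_sq_mul_sq Finset.univ (fun i => v (Fin.succ i)) fun i => w (Fin.succ i)

lemma minkEta_self_neg_of_minkEta_eq_zero (hv : 0 < minkEta n v v) (hvu : minkEta n v u = 0)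
    (hu : u ≠ 0) : minkEta n u u < 0 := by
  have hCS := sq_sum_succ_mul_le v u
  have hv_sp : 0 ≤ ∑ i : Fin n, v i.succ * v i.succ :=
    Finset.sum_nonneg fun i _ => mul_self_nonneg _
  have hu_pos : 0 < u 0 * u 0 + ∑ i : Fin n, u i.succ * u i.succ := by
    rw [← Fin.sum_univ_succ (fun i => u i * u i)]
    obtain ⟨i, hi⟩ := Function.ne_iff.1 hu
    exact Finset.sum_pos' (fun j _ => mul_self_nonneg _)
      ⟨i, Finset.mem_univ i, mul_self_pos.2 hi⟩
  unfold minkEta at *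
  rw [show ∑ i : Fin n, v i.succ * u i.succ = v 0 * u 0 by linarith] at hCS
  by_contra! h
  have hu0 : 0 < u 0 * u 0 := by linarith
  nlinarith [mul_pos (sub_pos.2 hv) hu0, mul_nonneg hv_sp h]

lemma minkEta_pos (hv0 : 0 < v 0) (hv : 0 < minkEta n v v) (hw0 : 0 < w 0)
    (hw : 0 < minkEta n w w) : 0 < minkEta n v w := by
  have hCS := sq_sum_succ_mul_le v w
  have hv_sp : 0 ≤ ∑ i : Fin n, v i.succ * v i.succ :=
    Finset.sum_nonneg fun i _ => mul_self_nonneg _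
  have hw_sp : 0 ≤ ∑ i : Fin n, w i.succ * w i.succ :=
    Finset.sum_nonneg fun i _ => mul_self_nonneg _
  unfold minkEta at *
  nlinarith [mul_pos hv0 hw0]

lemma minkEta_sub_proj_eq_zero (hv : minkEta n v v ≠ 0) (w : Fin (n + 1) → ℝ) :
    minkEta n v (w - (minkEta n v w / minkEta n v v) • v) = 0 := by
  rw [minkEta_sub_right, minkEta_smul_right, div_mul_cancel₀ _ hv, sub_self]

lemma minkEta_mul_minkEta_sub_proj_self (hv : minkEta n v v ≠ 0) (w : Fin (n + 1) → ℝ) :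
    minkEta n v v * minkEta n (w - (minkEta n v w / minkEta n v v) • v)
        (w - (minkEta n v w / minkEta n v v) • v) =
      minkEta n v v * minkEta n w w - minkEta n v w ^ 2 := by
  set c := minkEta n v w / minkEta n v v with hc
  have hperp : minkEta n (w - c • v) v = 0 := by
    rw [minkEta_comm]
    exact minkEta_sub_proj_eq_zero hv w
  rw [minkEta_sub_right, minkEta_smul_right, hperp, mul_zero, sub_zero, minkEta_comm _ w,
    minkEta_sub_right, minkEta_smul_right, minkEta_comm w v, hc]
  field_simp

theorem minkEta_mul_self_le_sq (hv : 0 < minkEta n v v) (w : Fin (n + 1) → ℝ) :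
    minkEta n v v * minkEta n w w ≤ minkEta n v w ^ 2 := by
  set u := w - (minkEta n v w / minkEta n v v) • v
  have hu : minkEta n u u ≤ 0 := by
    rcases eq_or_ne u 0 with hu | hu
    · simp [hu, minkEta]
    · exact (minkEta_self_neg_of_minkEta_eq_zero hv (minkEta_sub_proj_eq_zero hv.ne' w) hu).le
  linarith [minkEta_mul_minkEta_sub_proj_self hv.ne' w, mul_nonpos_of_nonneg_of_nonpos hv.le hu]

theorem minkEta_mul_self_eq_sq_iff (hv : 0 < minkEta n v v) (w : Fin (n + 1) → ℝ) :
    minkEta n v v * minkEta n w w = minkEta n v w ^ 2 ↔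
      w = (minkEta n v w / minkEta n v v) • v := by
  rw [← sub_eq_zero, ← minkEta_mul_minkEta_sub_proj_self hv.ne', mul_eq_zero,
    or_iff_right hv.ne', ← sub_eq_zero (a := w)]
  refine ⟨fun hu => ?_, fun hu => by rw [hu]; simp [minkEta]⟩
  by_contra hne
  exact (minkEta_self_neg_of_minkEta_eq_zero hv (minkEta_sub_proj_eq_zero hv.ne' w) hne).ne hu

theorem minkNorm_mul_minkNorm_le_minkEta (hv : 0 < minkEta n v v) (hvw : 0 ≤ minkEta n v w) :
    minkNorm n v * minkNorm n w ≤ minkEta n v w := by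
  rw [minkNorm, minkNorm, ← Real.sqrt_mul hv.le, Real.sqrt_le_left hvw]
  exact minkEta_mul_self_le_sq hv w

theorem minkEta_eq_minkNorm_mul_minkNorm_iff (hv : 0 < minkEta n v v) (hw : 0 ≤ minkEta n w w)
    (hvw : 0 < minkEta n v w) :
    minkEta n v w = minkNorm n v * minkNorm n w ↔ ∃ c : ℝ, 0 < c ∧ w = c • v := by
  constructor
  · intro h
    refine ⟨minkEta n v w / minkEta n v v, div_pos hvw hv,
      (minkEta_mul_self_eq_sq_iff hv w).1 ?_⟩
    rw [h, mul_pow, minkNorm, minkNorm, Real.sq_sqrt hv.le, Real.sq_sqrt hw]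
  · rintro ⟨c, hc, rfl⟩
    rw [minkNorm_smul, abs_of_pos hc, minkEta_smul_right, mul_left_comm, minkNorm,
      Real.mul_self_sqrt hv.le]

lemma exists_pos_smul_and_minkNorm_eq_rpow_iff (hv : 0 < minkEta n v v) (s : ℝ) :
    ((∃ c : ℝ, 0 < c ∧ w = c • v) ∧ minkNorm n w = minkNorm n v ^ s) ↔
      w = minkNorm n v ^ (s - 1) • v := by
  have ha := minkNorm_pos hv
  constructor
  · rintro ⟨⟨c, hc, rfl⟩, h⟩
    rw [minkNorm_smul, abs_of_pos hc] at h
    rw [Real.rpow_sub_one ha.ne', ← h, mul_div_cancel_right₀ _ ha.ne']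
  · rintro rfl
    have hc : 0 < minkNorm n v ^ (s - 1) := Real.rpow_pos_of_pos ha _
    refine ⟨⟨_, hc, rfl⟩, ?_⟩
    rw [minkNorm_smul, abs_of_pos hc, Real.rpow_sub_one ha.ne', div_mul_cancel₀ _ ha.ne']

end Minkowski

theorem minkowski_reverse_young_general (n : ℕ) (p q : ℝ)
    (hp0 : p ≠ 0) (hp1 : p < 1) (hpq : 1 / p + 1 / q = 1)
    (v w : Fin (n + 1) → ℝ)
    (hv0 : 0 < v 0) (hv : 0 < minkEta n v v)
    (hw0 : 0 < w 0) (hw : 0 < minkEta n w w) :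
    minkEta n v w ≥ minkNorm n v ^ p / p + minkNorm n w ^ q / q ∧
      (minkEta n v w = minkNorm n v ^ p / p + minkNorm n w ^ q / q ↔
        w = minkNorm n v ^ (p - 2) • v) := by
  have hvw : 0 < minkEta n v w := minkEta_pos hv0 hv hw0 hw
  have hcs := minkNorm_mul_minkNorm_le_minkEta hv hvw.le
  obtain ⟨hyoung, hyoung_eq⟩ :=
    Real.reverse_young (minkNorm_pos hv) (minkNorm_pos hw) hp0 hp1 hpq
  refine ⟨hyoung.trans hcs, ?_⟩
  calc minkEta n v w = minkNorm n v ^ p / p + minkNorm n w ^ q / q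
      ↔ minkEta n v w = minkNorm n v * minkNorm n w ∧
          minkNorm n v ^ p / p + minkNorm n w ^ q / q = minkNorm n v * minkNorm n w :=
        ⟨fun h => ⟨by linarith, by linarith⟩, fun h => h.1.trans h.2.symm⟩
    _ ↔ (∃ c : ℝ, 0 < c ∧ w = c • v) ∧ minkNorm n w = minkNorm n v ^ (p - 1) := by
        rw [minkEta_eq_minkNorm_mul_minkNorm_iff hv hw.le hvw, hyoung_eq]
    _ ↔ w = minkNorm n v ^ (p - 2) • v := by
        rw [exists_pos_smul_and_minkNorm_eq_rpow_iff hv, sub_sub, one_add_one_eq_two]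

/-- Reverse Young inequality in Minkowski space with Legendre equality: for conjugate
nonzero exponents `p, q < 1` and future-directed timelike `v, w`,
`η(v,w) ≥ |v|^p/p + |w|^q/q`, with equality iff `w = |v|^(p-2) • v`. -/
theorem minkowski_reverse_young (n : ℕ) (hn : 1 ≤ n) (p q : ℝ)
    (hp0 : p ≠ 0) (hq0 : q ≠ 0) (hp1 : p < 1) (hq1 : q < 1) (hpq : 1 / p + 1 / q = 1)
    (v w : Fin (n + 1) → ℝ)
    (hv0 : 0 < v 0) (hv : 0 < minkEta n v v)
    (hw0 : 0 < w 0) (hw : 0 < minkEta n w w) :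
    minkEta n v w ≥ minkNorm n v ^ p / p + minkNorm n w ^ q / q ∧
      (minkEta n v w = minkNorm n v ^ p / p + minkNorm n w ^ q / q ↔
        w = minkNorm n v ^ (p - 2) • v) :=
  minkowski_reverse_young_general n p q hp0 hp1 hpq v w hv0 hv hw0 hw
end

section
/- Concavity of the q-Lagrangian: let q be a nonzero real number with q < 1. The function L_q(v) := η(v,v)^{q/2} / q is concave on the open future timelike cone C⁺ = {v ∈ ℝ^{n+1} : v 0 > 0 and η(v,v) > 0} (which is a convex set). Moreover, if 0 < q < 1, then the function v ↦ η(v,v)^{q/2} / q is concave on the closed future causal cone {v ∈ ℝ^{n+1} : v 0 ≥ 0 and η(v,v) ≥ 0}. -/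
/-- The open future timelike cone in Minkowski space. -/
def futureTimeCone (n : ℕ) : Set (Fin (n + 1) → ℝ) :=
  {v | 0 < v 0 ∧ 0 < minkEta n v v}

/-- The closed future causal cone in Minkowski space. -/
def futureCausalCone (n : ℕ) : Set (Fin (n + 1) → ℝ) :=
  {v | 0 ≤ v 0 ∧ 0 ≤ minkEta n v v}

open Real Finset Set

namespace LagAux

/-- The Minkowski "norm". -/
noncomputable def rho (n : ℕ) (v : Fin (n + 1) → ℝ) : ℝ := Real.sqrt (minkEta n v v)

lemma rho_nonneg (n : ℕ) (v : Fin (n + 1) → ℝ) : 0 ≤ rho n v := Real.sqrt_nonneg _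

lemma rho_sq {n : ℕ} {v : Fin (n + 1) → ℝ} (hv : 0 ≤ minkEta n v v) :
    rho n v ^ 2 = minkEta n v v := Real.sq_sqrt hv

lemma eta_expand (n : ℕ) (a b : ℝ) (v w : Fin (n + 1) → ℝ) :
    minkEta n (a • v + b • w) (a • v + b • w)
      = a ^ 2 * minkEta n v v + 2 * a * b * minkEta n v w + b ^ 2 * minkEta n w w := by
  simp only [minkEta, Pi.add_apply, Pi.smul_apply, smul_eq_mul]
  rw [Finset.sum_congr rfl (fun i _ => by ring :
    ∀ i ∈ Finset.univ, (a * v (Fin.succ i) + b * w (Fin.succ i)) *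
        (a * v (Fin.succ i) + b * w (Fin.succ i))
      = a ^ 2 * (v (Fin.succ i) * v (Fin.succ i)) + 2 * a * b * (v (Fin.succ i) * w (Fin.succ i))
        + b ^ 2 * (w (Fin.succ i) * w (Fin.succ i)))]
  rw [Finset.sum_add_distrib, Finset.sum_add_distrib,
    ← Finset.mul_sum, ← Finset.mul_sum, ← Finset.mul_sum]
  ring

/-- Reverse Cauchy–Schwarz for future causal vectors. -/
lemma revCS {n : ℕ} {v w : Fin (n + 1) → ℝ} (hv : v ∈ futureCausalCone n)
    (hw : w ∈ futureCausalCone n) :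
    Real.sqrt (minkEta n v v) * Real.sqrt (minkEta n w w) ≤ minkEta n v w := by
  obtain ⟨hv0, hvv⟩ := hv
  obtain ⟨hw0, hww⟩ := hw
  set A := ∑ i : Fin n, v i.succ * v i.succ with hAdef
  set B := ∑ i : Fin n, w i.succ * w i.succ with hBdef
  set C := ∑ i : Fin n, v i.succ * w i.succ with hCdef
  have hA : 0 ≤ A := Finset.sum_nonneg fun i _ => mul_self_nonneg _
  have hB : 0 ≤ B := Finset.sum_nonneg fun i _ => mul_self_nonneg _
  have hCS : C ^ 2 ≤ A * B := by
    have := Finset.sum_mul_sq_le_sq_mul_sq Finset.univ (fun i : Fin n => v i.succ)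
      (fun i : Fin n => w i.succ)
    simpa [hAdef, hBdef, hCdef, sq] using this
  have hvvA : A ≤ v 0 * v 0 := by
    have : 0 ≤ v 0 * v 0 - A := hvv
    linarith
  have hwwB : B ≤ w 0 * w 0 := by
    have : 0 ≤ w 0 * w 0 - B := hww
    linarith
  have hsA : Real.sqrt A ≤ v 0 := by
    calc Real.sqrt A ≤ Real.sqrt (v 0 * v 0) := Real.sqrt_le_sqrt hvvA
    _ = v 0 := by rw [← sq]; exact Real.sqrt_sq hv0
  have hsB : Real.sqrt B ≤ w 0 := by
    calc Real.sqrt B ≤ Real.sqrt (w 0 * w 0) := Real.sqrt_le_sqrt hwwB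
    _ = w 0 := by rw [← sq]; exact Real.sqrt_sq hw0
  have hC : C ≤ Real.sqrt A * Real.sqrt B := by
    calc C ≤ |C| := le_abs_self _
    _ = Real.sqrt (C ^ 2) := (Real.sqrt_sq_eq_abs C).symm
    _ ≤ Real.sqrt (A * B) := Real.sqrt_le_sqrt hCS
    _ = Real.sqrt A * Real.sqrt B := Real.sqrt_mul hA B
  have hAB : Real.sqrt A * Real.sqrt B ≤ v 0 * w 0 :=
    mul_le_mul hsA hsB (Real.sqrt_nonneg _) hv0
  have hsqA : Real.sqrt A ^ 2 = A := Real.sq_sqrt hA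
  have hsqB : Real.sqrt B ^ 2 = B := Real.sq_sqrt hB
  have hkey : Real.sqrt (v 0 * v 0 - A) * Real.sqrt (w 0 * w 0 - B)
      ≤ v 0 * w 0 - Real.sqrt A * Real.sqrt B := by
    have hprod : (v 0 * v 0 - A) * (w 0 * w 0 - B)
        ≤ (v 0 * w 0 - Real.sqrt A * Real.sqrt B) ^ 2 := by
      nlinarith [sq_nonneg (v 0 * Real.sqrt B - Real.sqrt A * w 0),
        Real.sqrt_nonneg A, Real.sqrt_nonneg B]
    calc Real.sqrt (v 0 * v 0 - A) * Real.sqrt (w 0 * w 0 - B)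
        = Real.sqrt ((v 0 * v 0 - A) * (w 0 * w 0 - B)) := (Real.sqrt_mul hvv _).symm
      _ ≤ Real.sqrt ((v 0 * w 0 - Real.sqrt A * Real.sqrt B) ^ 2) :=
          Real.sqrt_le_sqrt hprod
      _ = |v 0 * w 0 - Real.sqrt A * Real.sqrt B| := Real.sqrt_sq_eq_abs _
      _ = v 0 * w 0 - Real.sqrt A * Real.sqrt B := abs_of_nonneg (by linarith)
  have hηv : minkEta n v v = v 0 * v 0 - A := rfl
  have hηw : minkEta n w w = w 0 * w 0 - B := rfl
  have hηvw : minkEta n v w = v 0 * w 0 - C := rfl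
  rw [hηv, hηw, hηvw]
  linarith

/-- Key combination lemma: the causal cone is closed under convex combination, and ρ is
superadditive on convex combinations. -/
lemma key {n : ℕ} {v w : Fin (n + 1) → ℝ} (hv : v ∈ futureCausalCone n)
    (hw : w ∈ futureCausalCone n) {a b : ℝ} (ha : 0 ≤ a) (hb : 0 ≤ b) (hab : a + b = 1) :
    (a • v + b • w ∈ futureCausalCone n) ∧
      a * rho n v + b * rho n w ≤ rho n (a • v + b • w) := by
  have hvw : rho n v * rho n w ≤ minkEta n v w := revCS hv hw
  have hrv := rho_sq hv.2
  have hrw := rho_sq hw.2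
  have hsq : (a * rho n v + b * rho n w) ^ 2 ≤ minkEta n (a • v + b • w) (a • v + b • w) := by
    rw [eta_expand]
    nlinarith [mul_nonneg (mul_nonneg ha hb) (sub_nonneg.2 hvw), rho_nonneg n v, rho_nonneg n w,
      sq_nonneg a, sq_nonneg b]
  have hcomb0 : 0 ≤ (a • v + b • w) 0 := by
    have : (a • v + b • w) 0 = a * v 0 + b * w 0 := rfl
    rw [this]
    have := hv.1; have := hw.1
    positivity
  have hηc : 0 ≤ minkEta n (a • v + b • w) (a • v + b • w) :=
    le_trans (sq_nonneg _) hsq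
  refine ⟨⟨hcomb0, hηc⟩, ?_⟩
  have hnn : 0 ≤ a * rho n v + b * rho n w := by
    have := rho_nonneg n v; have := rho_nonneg n w
    positivity
  calc a * rho n v + b * rho n w
      = Real.sqrt ((a * rho n v + b * rho n w) ^ 2) := (Real.sqrt_sq hnn).symm
    _ ≤ rho n (a • v + b • w) := Real.sqrt_le_sqrt hsq

lemma causal_convex (n : ℕ) : Convex ℝ (futureCausalCone n) := by
  intro v hv w hw a b ha hb hab
  exact (key hv hw ha hb hab).1

lemma time_subset_causal (n : ℕ) : futureTimeCone n ⊆ futureCausalCone n :=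
  fun v hv => ⟨hv.1.le, hv.2.le⟩

lemma time_convex (n : ℕ) : Convex ℝ (futureTimeCone n) := by
  intro v hv w hw a b ha hb hab
  have hvc := time_subset_causal n hv
  have hwc := time_subset_causal n hw
  have hvw : 0 ≤ minkEta n v w :=
    le_trans (mul_nonneg (rho_nonneg n v) (rho_nonneg n w)) (revCS hvc hwc)
  constructor
  · have : (a • v + b • w) 0 = a * v 0 + b * w 0 := rfl
    rw [this]
    rcases eq_or_lt_of_le ha with rfl | ha'
    · simp only [zero_add] at hab; subst hab; simpa using hw.1
    · have : 0 ≤ b * w 0 := mul_nonneg hb hw.1.le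
      nlinarith [hv.1]
  · rw [eta_expand]
    rcases eq_or_lt_of_le ha with rfl | ha'
    · simp only [zero_add] at hab; subst hab
      simpa using hw.2
    · have h1 : 0 < a ^ 2 * minkEta n v v := mul_pos (pow_pos ha' 2) hv.2
      have h2 : 0 ≤ 2 * a * b * minkEta n v w :=
        mul_nonneg (mul_nonneg (mul_nonneg two_pos.le ha) hb) hvw
      have h3 : 0 ≤ b ^ 2 * minkEta n w w := mul_nonneg (sq_nonneg b) hw.2.le
      linarith

lemma rho_concaveOn_causal (n : ℕ) : ConcaveOn ℝ (futureCausalCone n) (rho n) :=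
  ⟨causal_convex n, fun _ hv _ hw _ _ ha hb hab => (key hv hw ha hb hab).2⟩

lemma rho_concaveOn_time (n : ℕ) : ConcaveOn ℝ (futureTimeCone n) (rho n) :=
  ⟨time_convex n, fun _ hv _ hw _ _ ha hb hab =>
    (key (time_subset_causal n hv) (time_subset_causal n hw) ha hb hab).2⟩

/-- Composition of a concave function with a monotone concave function. -/
lemma concave_comp {E : Type*} [AddCommMonoid E] [Module ℝ E] {s : Set E} {f : E → ℝ}
    {g : ℝ → ℝ} {t : Set ℝ} (hf : ConcaveOn ℝ s f) (hmem : ∀ x ∈ s, f x ∈ t)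
    (ht : Convex ℝ t) (hg : ConcaveOn ℝ t g) (hg' : MonotoneOn g t) :
    ConcaveOn ℝ s (fun x => g (f x)) := by
  refine ⟨hf.1, fun x hx y hy a b ha hb hab => ?_⟩
  have hmx := hmem x hx
  have hmy := hmem y hy
  have hcomb : a • f x + b • f y ∈ t := ht hmx hmy ha hb hab
  have hfc : f (a • x + b • y) ∈ t := hmem _ (hf.1 hx hy ha hb hab)
  calc a • g (f x) + b • g (f y) ≤ g (a • f x + b • f y) := hg.2 hmx hmy ha hb hab
    _ ≤ g (f (a • x + b • y)) := hg' hcomb hfc (hf.2 hx hy ha hb hab)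

lemma concaveOn_congr' {E : Type*} [AddCommMonoid E] [Module ℝ E] {s : Set E} {f g : E → ℝ}
    (h : ConcaveOn ℝ s f) (he : ∀ x ∈ s, f x = g x) : ConcaveOn ℝ s g := by
  refine ⟨h.1, fun x hx y hy a b ha hb hab => ?_⟩
  rw [← he x hx, ← he y hy, ← he _ (h.1 hx hy ha hb hab)]
  exact h.2 hx hy ha hb hab

lemma pow_half_eq {x : ℝ} (hx : 0 ≤ x) (q : ℝ) : x ^ (q / 2) = Real.sqrt x ^ q := by
  rw [Real.sqrt_eq_rpow, ← Real.rpow_mul hx]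
  congr 1
  ring

/-- Concavity of `x ↦ x^q/q` on `[0,∞)` for `0 < q < 1`. -/
lemma g_concave_pos {q : ℝ} (hq0 : 0 < q) (hq1 : q < 1) :
    ConcaveOn ℝ (Set.Ici (0:ℝ)) (fun x : ℝ => x ^ q / q) := by
  have h := (Real.concaveOn_rpow hq0.le hq1.le).smul (le_of_lt (inv_pos.2 hq0))
  refine concaveOn_congr' h fun x _ => ?_
  simp [smul_eq_mul, div_eq_inv_mul]

lemma g_mono_pos {q : ℝ} (hq0 : 0 < q) :
    MonotoneOn (fun x : ℝ => x ^ q / q) (Set.Ici (0:ℝ)) := by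
  intro x hx y _ hxy
  have h := Real.rpow_le_rpow hx hxy hq0.le
  exact (div_le_div_iff_of_pos_right hq0).2 h

/-- Monotonicity of `x ↦ x^q/q` on `(0,∞)` for `q < 0`. -/
lemma g_mono_neg {q : ℝ} (hq : q < 0) :
    MonotoneOn (fun x : ℝ => x ^ q / q) (Set.Ioi (0:ℝ)) := by
  intro x hx y _ hxy
  have h : y ^ q ≤ x ^ q := Real.rpow_le_rpow_of_nonpos hx hxy hq.le
  simp only [div_eq_mul_inv]
  exact mul_le_mul_of_nonpos_right h (le_of_lt (inv_neg''.2 hq))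

/-- Concavity of `x ↦ x^q/q` on `(0,∞)` for `q < 0`. -/
lemma g_concave_neg {q : ℝ} (hq : q < 0) :
    ConcaveOn ℝ (Set.Ioi (0:ℝ)) (fun x : ℝ => x ^ q / q) := by
  have hderiv : ∀ x : ℝ, 0 < x → HasDerivAt (fun y : ℝ => y ^ q / q) (x ^ (q - 1)) x := by
    intro x hx
    have h := (Real.hasDerivAt_rpow_const (p := q) (Or.inl hx.ne')).div_const q
    simpa [mul_div_assoc, mul_div_cancel_left₀ _ (ne_of_lt hq)] using h
  have hdiff : DifferentiableOn ℝ (fun y : ℝ => y ^ q / q) (interior (Set.Ioi (0:ℝ))) := by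
    rw [interior_Ioi]
    intro x hx
    exact ((hderiv x hx).differentiableAt).differentiableWithinAt
  refine concaveOn_of_deriv2_nonpos (convex_Ioi 0) (hdiff.continuousOn.mono ?_) hdiff ?_ ?_
  · rw [interior_Ioi]
  · rw [interior_Ioi]
    have hd1 : ∀ x ∈ Set.Ioi (0:ℝ), deriv (fun y : ℝ => y ^ q / q) x = x ^ (q - 1) :=
      fun x hx => (hderiv x hx).deriv
    intro x hx
    have heq : deriv (fun y : ℝ => y ^ q / q) =ᶠ[nhds x] fun y => y ^ (q - 1) := by
      filter_upwards [IsOpen.mem_nhds isOpen_Ioi hx] with y hy using hd1 y hy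
    have : HasDerivAt (fun y : ℝ => y ^ (q - 1)) ((q - 1) * x ^ (q - 1 - 1)) x :=
      Real.hasDerivAt_rpow_const (Or.inl (ne_of_gt hx))
    exact (this.congr_of_eventuallyEq heq).differentiableAt.differentiableWithinAt
  · rw [interior_Ioi]
    intro x hx
    have heq : deriv (fun y : ℝ => y ^ q / q) =ᶠ[nhds x] fun y => y ^ (q - 1) := by
      filter_upwards [IsOpen.mem_nhds isOpen_Ioi hx] with y hy using (hderiv y hy).deriv
    have hd2 : deriv (deriv (fun y : ℝ => y ^ q / q)) x
        = deriv (fun y : ℝ => y ^ (q - 1)) x := heq.deriv_eq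
    have : HasDerivAt (fun y : ℝ => y ^ (q - 1)) ((q - 1) * x ^ (q - 1 - 1)) x :=
      Real.hasDerivAt_rpow_const (Or.inl (ne_of_gt hx))
    have hd3 : deriv (fun y : ℝ => y ^ (q - 1)) x = (q - 1) * x ^ (q - 1 - 1) := this.deriv
    have hxp : 0 < x ^ (q - 1 - 1) := Real.rpow_pos_of_pos hx _
    simp only [Function.iterate_succ, Function.iterate_zero, Function.comp_apply, id_eq]
    rw [hd2, hd3]
    nlinarith

end LagAux

/-- Concavity of the `q`-Lagrangian `L_q(v) = η(v,v)^{q/2}/q` on the open future timelike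
cone (a convex set), for nonzero `q < 1`; and, if `0 < q < 1`, concavity of
`v ↦ η(v,v)^{q/2}/q` on the closed future causal cone. -/
theorem lagrangian_concave (n : ℕ) (hn : 1 ≤ n) (q : ℝ) (hq0 : q ≠ 0) (hq1 : q < 1) :
    (Convex ℝ (futureTimeCone n) ∧
      ConcaveOn ℝ (futureTimeCone n) (fun v => minkEta n v v ^ (q / 2) / q)) ∧
    (0 < q →
      ConcaveOn ℝ (futureCausalCone n) (fun v => minkEta n v v ^ (q / 2) / q)) := by
  constructor
  · refine ⟨LagAux.time_convex n, ?_⟩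
    rcases lt_or_gt_of_ne hq0 with hqneg | hqpos
    · -- q < 0 case, on the open time cone
      have hcomp := LagAux.concave_comp (LagAux.rho_concaveOn_time n)
        (fun v hv => Real.sqrt_pos.2 hv.2 : ∀ v ∈ futureTimeCone n, LagAux.rho n v ∈ Set.Ioi (0:ℝ))
        (convex_Ioi 0) (LagAux.g_concave_neg hqneg) (LagAux.g_mono_neg hqneg)
      refine LagAux.concaveOn_congr' hcomp fun v hv => ?_
      simp only [LagAux.rho]
      rw [LagAux.pow_half_eq hv.2.le]
    · -- 0 < q < 1 case
      have hcomp := LagAux.concave_comp (LagAux.rho_concaveOn_time n)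
        (fun v _ => Real.sqrt_nonneg _ : ∀ v ∈ futureTimeCone n, LagAux.rho n v ∈ Set.Ici (0:ℝ))
        (convex_Ici 0) (LagAux.g_concave_pos hqpos hq1) (LagAux.g_mono_pos hqpos)
      refine LagAux.concaveOn_congr' hcomp fun v hv => ?_
      simp only [LagAux.rho]
      rw [LagAux.pow_half_eq hv.2.le]
  · intro hqpos
    have hcomp := LagAux.concave_comp (LagAux.rho_concaveOn_causal n)
      (fun v _ => Real.sqrt_nonneg _ : ∀ v ∈ futureCausalCone n, LagAux.rho n v ∈ Set.Ici (0:ℝ))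
      (convex_Ici 0) (LagAux.g_concave_pos hqpos hq1) (LagAux.g_mono_pos hqpos)
    refine LagAux.concaveOn_congr' hcomp fun v hv => ?_
    simp only [LagAux.rho]
    rw [LagAux.pow_half_eq hv.2]
end

section
/- Ellipticity of the principal symbol of the p-d'Alembertian: let p < 1 be a real number and let w ∈ ℝ^{n+1} be timelike, i.e. η(w,w) > 0. Then the quadratic form Q(ζ) := (2−p) · η(w,ζ)² / η(w,w) − η(ζ,ζ) is positive definite on ℝ^{n+1}: Q(ζ) > 0 for every ζ ≠ 0. -/
namespace LinearMap.BilinForm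

section Field

variable {𝕜 V : Type*} [Field 𝕜] [AddCommGroup V] [Module 𝕜 V]
  (B : LinearMap.BilinForm 𝕜 V) (w ζ : V)

def orthComponent : V := ζ - (B w ζ / B w w) • w

variable {B w}

theorem apply_orthComponent (hw : B w w ≠ 0) : B w (B.orthComponent w ζ) = 0 := by
  simp [orthComponent, div_mul_cancel₀ _ hw]

theorem apply_self_eq_sq_div_add_orthComponent (hB : B.IsSymm) (hw : B w w ≠ 0) :
    B ζ ζ = B w ζ ^ 2 / B w w + B (B.orthComponent w ζ) (B.orthComponent w ζ) := by
  simp only [orthComponent, map_sub, map_smul, LinearMap.sub_apply, LinearMap.smul_apply,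
    smul_eq_mul, hB.eq ζ w]
  field_simp
  ring

end Field

variable {𝕜 V : Type*} [Field 𝕜] [LinearOrder 𝕜] [IsStrictOrderedRing 𝕜]
  [AddCommGroup V] [Module 𝕜 V] {B : LinearMap.BilinForm 𝕜 V} {w : V}

theorem sub_sq_div_pos_of_neg_on_orthogonal (hB : B.IsSymm) (hw : 0 < B w w)
    (horth : ∀ ζ, B w ζ = 0 → ζ ≠ 0 → B ζ ζ < 0) {p : 𝕜} (hp : p < 1) {ζ : V} (hζ : ζ ≠ 0) :
    0 < (2 - p) * B w ζ ^ 2 / B w w - B ζ ζ := by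
  rw [apply_self_eq_sq_div_add_orthComponent ζ hB hw.ne']
  set ζ' := B.orthComponent w ζ with hζ'
  have hsplit : (2 - p) * B w ζ ^ 2 / B w w - (B w ζ ^ 2 / B w w + B ζ' ζ')
      = (1 - p) * (B w ζ ^ 2 / B w w) - B ζ' ζ' := by ring
  have hp' : 0 < 1 - p := sub_pos.2 hp
  rw [hsplit]
  by_cases h0 : ζ' = 0
  · have hu : B w ζ ≠ 0 := by
      intro hu
      exact hζ (by simpa [hζ', orthComponent, hu] using h0)
    rw [h0, map_zero, sub_zero]
    positivity
  · have hneg := horth ζ' (apply_orthComponent ζ hw.ne') h0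
    have : 0 ≤ (1 - p) * (B w ζ ^ 2 / B w w) := by positivity
    linarith

end LinearMap.BilinForm

def minkowskiForm (n : ℕ) : LinearMap.BilinForm ℝ (Fin (n + 1) → ℝ) :=
  LinearMap.mk₂ ℝ (minkEta n)
    (fun u v w => by simp only [minkEta, Pi.add_apply, add_mul, Finset.sum_add_distrib]; ring)
    (fun c v w => by
      simp only [minkEta, Pi.smul_apply, smul_eq_mul, mul_assoc, ← Finset.mul_sum]; ring)
    (fun u v w => by simp only [minkEta, Pi.add_apply, mul_add, Finset.sum_add_distrib]; ring)
    (fun c v w => by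
      simp only [minkEta, Pi.smul_apply, smul_eq_mul, mul_left_comm _ c, ← Finset.mul_sum]; ring)

@[simp]
theorem minkowskiForm_apply (n : ℕ) (v w : Fin (n + 1) → ℝ) :
    minkowskiForm n v w = minkEta n v w :=
  rfl

theorem minkowskiForm_isSymm (n : ℕ) : (minkowskiForm n).IsSymm :=
  ⟨fun v w => by simp only [minkowskiForm_apply, minkEta, mul_comm (v _)]⟩

theorem minkEta_self_neg_of_orthogonal {n : ℕ} {w ζ : Fin (n + 1) → ℝ} (hw : 0 < minkEta n w w)
    (horth : minkEta n w ζ = 0) (hζ : ζ ≠ 0) : minkEta n ζ ζ < 0 := by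
  have hCS := Finset.sum_mul_sq_le_sq_mul_sq Finset.univ (fun i : Fin n => w i.succ)
    (fun i => ζ i.succ)
  have hζ_sq : 0 < ζ 0 ^ 2 + ∑ i : Fin n, ζ i.succ ^ 2 := by
    rw [← Fin.sum_univ_succ (fun i => ζ i ^ 2)]
    obtain ⟨i, hi⟩ := Function.ne_iff.1 hζ
    exact Finset.sum_pos' (fun i _ => sq_nonneg _) ⟨i, Finset.mem_univ _, sq_pos_of_ne_zero hi⟩
  simp only [minkEta, ← sq] at hw horth hCS ⊢
  set S := ∑ i : Fin n, w i.succ * ζ i.succ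
  set B := ∑ i : Fin n, w i.succ ^ 2
  set D := ∑ i : Fin n, ζ i.succ ^ 2
  have hB : 0 ≤ B := Finset.sum_nonneg fun i _ => sq_nonneg _
  have hS : S ^ 2 = w 0 ^ 2 * ζ 0 ^ 2 := by rw [← sub_eq_zero.1 horth]; ring
  by_contra! h
  -- `(w₀² - B)(ζ₀² + D) + 2 (B D - S²) + (w₀² + B)(ζ₀² - D) = 0`, yet the first term is positive.
  nlinarith [mul_pos hw hζ_sq, mul_nonneg (add_nonneg (sq_nonneg (w 0)) hB) (sub_nonneg.2 h)]

theorem p_dalembertian_symbol_elliptic_general (n : ℕ) (p : ℝ) (hp : p < 1)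
    (w : Fin (n + 1) → ℝ) (hw : 0 < minkEta n w w) :
    ∀ ζ : Fin (n + 1) → ℝ, ζ ≠ 0 →
      0 < (2 - p) * minkEta n w ζ ^ 2 / minkEta n w w - minkEta n ζ ζ := fun _ hζ =>
  LinearMap.BilinForm.sub_sq_div_pos_of_neg_on_orthogonal (minkowskiForm_isSymm n) hw
    (fun _ => minkEta_self_neg_of_orthogonal hw) hp hζ

/-- Ellipticity of the principal symbol of the `p`-d'Alembertian: for `p < 1` and a
timelike vector `w`, the quadratic form
`Q(ζ) = (2-p)·η(w,ζ)²/η(w,w) − η(ζ,ζ)` is positive definite. -/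
theorem p_dalembertian_symbol_elliptic (n : ℕ) (hn : 1 ≤ n) (p : ℝ) (hp : p < 1)
    (w : Fin (n + 1) → ℝ) (hw : 0 < minkEta n w w) :
    ∀ ζ : Fin (n + 1) → ℝ, ζ ≠ 0 →
      0 < (2 - p) * minkEta n w ζ ^ 2 / minkEta n w w - minkEta n ζ ζ :=
  p_dalembertian_symbol_elliptic_general n p hp w hw
end

section
/- Logarithmic derivative estimate for (K,N)-convex densities: let K ∈ ℝ, N > 1, and let a < b be reals; if K > 0 assume additionally b − a ≤ π·√((N−1)/K). Let h : (a,b) → ℝ be positive and satisfy the (K,N)-convexity inequality on (a,b). Then at every t ∈ (a,b) at which h is differentiable, −(N−1)·C_{K,N}(b − t) ≤ h'(t)/h(t) ≤ (N−1)·C_{K,N}(t − a). -/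
noncomputable section

/-- The distortion coefficient `σ_κ^{(s)}(θ)`. -/
def sigmaCoeff (κ s θ : ℝ) : ℝ :=
  if 0 < κ then Real.sin (s * θ * Real.sqrt κ) / Real.sin (θ * Real.sqrt κ)
  else if κ = 0 then s
  else Real.sinh (s * θ * Real.sqrt (-κ)) / Real.sinh (θ * Real.sqrt (-κ))

/-- A positive function `h` on a real interval `I` satisfies the `(K,N)`-convexity
inequality. -/
def KNConvexOn (K N : ℝ) (I : Set ℝ) (h : ℝ → ℝ) : Prop :=
  ∀ t₀ ∈ I, ∀ t₁ ∈ I, t₀ < t₁ → ∀ l ∈ Set.Icc (0 : ℝ) 1,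
    sigmaCoeff (K / (N - 1)) (1 - l) (t₁ - t₀) * h t₀ ^ (1 / (N - 1)) +
        sigmaCoeff (K / (N - 1)) l (t₁ - t₀) * h t₁ ^ (1 / (N - 1)) ≤
      h ((1 - l) * t₀ + l * t₁) ^ (1 / (N - 1))

/-- The comparison coefficient `C_{K,N}(θ)`. -/
def comparisonC (K N θ : ℝ) : ℝ :=
  if 0 < K then
    Real.sqrt (K / (N - 1)) *
      (Real.cos (θ * Real.sqrt (K / (N - 1))) / Real.sin (θ * Real.sqrt (K / (N - 1))))
  else if K = 0 then 1 / θ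
  else
    Real.sqrt (-K / (N - 1)) *
      (Real.cosh (θ * Real.sqrt (-K / (N - 1))) / Real.sinh (θ * Real.sqrt (-K / (N - 1))))

/-! With `g = h ^ (1 / (N - 1))` and `a < s < t < b`, dropping the `h s` term of the
`(K,N)`-convexity inequality on `[s, t]` shows that `μ ↦ g (t - μ (t - s))` lies above
`μ ↦ σ^{(1-μ)}(t - s) g t` for small `μ > 0`, with equality at `μ = 0`. Comparing the
derivatives at `μ = 0` gives `g' t / g t ≤ C_{K,N}(t - s)`, that is
`h' t / h t ≤ (N - 1) C_{K,N}(t - s)`, and letting `s ↓ a` gives the upper bound. The lower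
bound is the upper bound for `x ↦ h (-x)`, which is `(K,N)`-convex on `(-b, -a)` because the
convexity inequality is symmetric under `(t₀, t₁, λ) ↦ (-t₁, -t₀, 1 - λ)`. -/

open Real Filter Set Topology

lemma sigmaCoeff_one {κ θ : ℝ} (hθ : 0 < θ) (hκ : 0 < κ → θ * √κ < π) :
    sigmaCoeff κ 1 θ = 1 := by
  unfold sigmaCoeff
  split_ifs with hpos hzero
  · rw [one_mul, div_self]
    exact (sin_pos_of_pos_of_lt_pi (by positivity) (hκ hpos)).ne'
  · rfl
  · have hneg : 0 < -κ := neg_pos.2 (lt_of_le_of_ne (not_lt.1 hpos) hzero)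
    rw [one_mul, div_self]
    exact (sinh_pos_iff.2 (by positivity)).ne'

lemma sigmaCoeff_nonneg {κ s θ : ℝ} (hs : s ∈ Icc (0 : ℝ) 1) (hθ : 0 < θ)
    (hκ : 0 < κ → θ * √κ < π) : 0 ≤ sigmaCoeff κ s θ := by
  unfold sigmaCoeff
  split_ifs with hpos hzero
  · have hsqrt : 0 < √κ := sqrt_pos.2 hpos
    refine div_nonneg (sin_nonneg_of_nonneg_of_le_pi (by have := hs.1; positivity) ?_)
      (sin_pos_of_pos_of_lt_pi (by positivity) (hκ hpos)).le
    nlinarith [hκ hpos, hs.2, mul_pos hθ hsqrt]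
  · exact hs.1
  · have hneg : 0 < -κ := neg_pos.2 (lt_of_le_of_ne (not_lt.1 hpos) hzero)
    exact div_nonneg (sinh_nonneg_iff.2 (by have := hs.1; positivity))
      (sinh_pos_iff.2 (by positivity)).le

lemma hasDerivAt_div_apply_one_sub_mul {F : ℝ → ℝ} {x F'x : ℝ} (hF : HasDerivAt F F'x x) :
    HasDerivAt (fun μ => F ((1 - μ) * x) / F x) (-(x * (F'x / F x))) 0 := by
  have hlin : HasDerivAt (fun μ : ℝ => (1 - μ) * x) (-x) 0 := by
    simpa using ((hasDerivAt_id (0 : ℝ)).const_sub 1).mul_const x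
  have hF' : HasDerivAt F F'x ((fun μ : ℝ => (1 - μ) * x) 0) := by simpa using hF
  exact ((hF'.comp 0 hlin).div_const (F x)).congr_deriv (by ring)

lemma hasDerivAt_sigmaCoeff_one_sub {K N θ : ℝ} (hN : 1 < N) (hθ : 0 < θ) :
    HasDerivAt (fun μ => sigmaCoeff (K / (N - 1)) (1 - μ) θ)
      (-(θ * comparisonC K N θ)) 0 := by
  have hN1 : 0 < N - 1 := by linarith
  rcases lt_trichotomy K 0 with hK | rfl | hK
  · have hκ : ¬0 < K / (N - 1) := not_lt.2 (div_nonpos_of_nonpos_of_nonneg hK.le hN1.le)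
    have hκ0 : K / (N - 1) ≠ 0 := div_ne_zero hK.ne hN1.ne'
    have hσ : (fun μ => sigmaCoeff (K / (N - 1)) (1 - μ) θ) = fun μ =>
        sinh ((1 - μ) * (θ * √(-K / (N - 1)))) / sinh (θ * √(-K / (N - 1))) := by
      ext μ
      simp only [sigmaCoeff, if_neg hκ, if_neg hκ0, neg_div, mul_assoc]
    rw [hσ]
    refine (hasDerivAt_div_apply_one_sub_mul (hasDerivAt_sinh _)).congr_deriv ?_
    simp only [comparisonC, if_neg hK.not_gt, if_neg hK.ne]
    ring
  · have hσ : (fun μ => sigmaCoeff (0 / (N - 1)) (1 - μ) θ) = fun μ => 1 - μ := by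
      ext μ
      simp [sigmaCoeff]
    rw [hσ]
    refine ((hasDerivAt_id (0 : ℝ)).const_sub 1).congr_deriv ?_
    simp [comparisonC, hθ.ne']
  · have hκ : 0 < K / (N - 1) := div_pos hK hN1
    have hσ : (fun μ => sigmaCoeff (K / (N - 1)) (1 - μ) θ) = fun μ =>
        sin ((1 - μ) * (θ * √(K / (N - 1)))) / sin (θ * √(K / (N - 1))) := by
      ext μ
      simp only [sigmaCoeff, if_pos hκ, mul_assoc]
    rw [hσ]
    refine (hasDerivAt_div_apply_one_sub_mul (hasDerivAt_sin _)).congr_deriv ?_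
    simp only [comparisonC, if_pos hK]
    ring

lemma continuousAt_comparisonC {K N θ : ℝ} (hN : 1 < N) (hθ : 0 < θ)
    (hπ : 0 < K → θ * √(K / (N - 1)) < π) : ContinuousAt (comparisonC K N) θ := by
  have hN1 : 0 < N - 1 := by linarith
  rcases lt_trichotomy K 0 with hK | rfl | hK
  · have hsinh : sinh (θ * √(-K / (N - 1))) ≠ 0 :=
      (sinh_pos_iff.2 (mul_pos hθ (sqrt_pos.2 (div_pos (neg_pos.2 hK) hN1)))).ne'
    have hC : comparisonC K N = fun x => √(-K / (N - 1)) *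
        (cosh (x * √(-K / (N - 1))) / sinh (x * √(-K / (N - 1)))) := by
      ext x
      simp only [comparisonC, if_neg hK.not_gt, if_neg hK.ne]
    rw [hC]
    fun_prop (disch := exact hsinh)
  · have hC : comparisonC 0 N = fun x => 1 / x := by
      ext x
      simp [comparisonC]
    rw [hC]
    fun_prop (disch := exact hθ.ne')
  · have hsin : sin (θ * √(K / (N - 1))) ≠ 0 :=
      (sin_pos_of_pos_of_lt_pi (mul_pos hθ (sqrt_pos.2 (div_pos hK hN1))) (hπ hK)).ne'
    have hC : comparisonC K N = fun x => √(K / (N - 1)) *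
        (cos (x * √(K / (N - 1))) / sin (x * √(K / (N - 1)))) := by
      ext x
      simp only [comparisonC, if_pos hK]
    rw [hC]
    fun_prop (disch := exact hsin)

lemma mul_sqrt_div_lt_pi {K M θ : ℝ} (hKM : 0 < M / K) (hθ : θ < π * √(M / K)) :
    θ * √(K / M) < π := by
  rwa [← inv_div, sqrt_inv, ← div_eq_mul_inv, div_lt_iff₀ (sqrt_pos.2 hKM)]

lemma HasDerivAt.le_of_eq_of_eventually_le {f g : ℝ → ℝ} {f' g' x : ℝ}
    (hf : HasDerivAt f f' x) (hg : HasDerivAt g g' x) (hfg : f x = g x)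
    (hle : ∀ᶠ y in 𝓝[>] x, f y ≤ g y) : f' ≤ g' := by
  rw [← sub_nonneg]
  refine ge_of_tendsto ((hasDerivAt_iff_tendsto_slope.1 (hg.sub hf)).mono_left
    (nhdsGT_le_nhdsNE x)) ?_
  filter_upwards [hle, self_mem_nhdsWithin] with y hy hxy
  rw [slope_def_field]
  exact div_nonneg (by simpa [hfg] using hy) (sub_nonneg.2 (le_of_lt hxy))

lemma KNConvexOn.comp_neg {K N : ℝ} {I : Set ℝ} {h : ℝ → ℝ} (hconv : KNConvexOn K N I h) :
    KNConvexOn K N (-I) (fun x => h (-x)) := by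
  intro t₀ ht₀ t₁ ht₁ hlt l hl
  have hmirror := hconv (-t₁) ht₁ (-t₀) ht₀ (neg_lt_neg hlt) (1 - l)
    ⟨by linarith [hl.2], by linarith [hl.1]⟩
  rw [sub_sub_cancel, neg_sub_neg, add_comm] at hmirror
  convert hmirror using 3
  ring

lemma KNConvexOn.deriv_div_le_of_lt {K N s t : ℝ} {I : Set ℝ} {h : ℝ → ℝ} (hN : 1 < N)
    (hconv : KNConvexOn K N I h) (hs : s ∈ I) (ht : t ∈ I) (hst : s < t)
    (hπ : 0 < K → (t - s) * √(K / (N - 1)) < π) (hhs : 0 ≤ h s) (hht : 0 < h t)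
    (hd : DifferentiableAt ℝ h t) :
    deriv h t / h t ≤ (N - 1) * comparisonC K N (t - s) := by
  have hN1 : 0 < N - 1 := by linarith
  have hθ : 0 < t - s := sub_pos.2 hst
  have hκ : 0 < K / (N - 1) → (t - s) * √(K / (N - 1)) < π :=
    fun hκ => hπ ((div_pos_iff_of_pos_right hN1).1 hκ)
  have hbarrier : ∀ᶠ μ in 𝓝[>] 0,
      sigmaCoeff (K / (N - 1)) (1 - μ) (t - s) * h t ^ (1 / (N - 1)) ≤
        h (t - μ * (t - s)) ^ (1 / (N - 1)) := by
    filter_upwards [Ioo_mem_nhdsGT one_pos] with μ hμ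
    have hconvμ := hconv s hs t ht hst (1 - μ) ⟨by linarith [hμ.2], by linarith [hμ.1]⟩
    rw [sub_sub_cancel, show μ * s + (1 - μ) * t = t - μ * (t - s) by ring] at hconvμ
    have : 0 ≤ sigmaCoeff (K / (N - 1)) μ (t - s) * h s ^ (1 / (N - 1)) :=
      mul_nonneg (sigmaCoeff_nonneg (Ioo_subset_Icc_self hμ) hθ hκ) (rpow_nonneg hhs _)
    linarith
  have hsegment : HasDerivAt (fun μ : ℝ => t - μ * (t - s)) (-(t - s)) 0 := by
    simpa using ((hasDerivAt_id (0 : ℝ)).mul_const (t - s)).const_sub t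
  have hpow : HasDerivAt (fun y => h y ^ (1 / (N - 1)))
      (deriv h t * (1 / (N - 1)) * h t ^ (1 / (N - 1) - 1))
      ((fun μ : ℝ => t - μ * (t - s)) 0) := by
    simpa only [zero_mul, sub_zero] using hd.hasDerivAt.rpow_const (Or.inl hht.ne')
  have hderiv_le := ((hasDerivAt_sigmaCoeff_one_sub hN hθ).mul_const
    (h t ^ (1 / (N - 1)))).le_of_eq_of_eventually_le (hpow.comp 0 hsegment)
    (by simp [sigmaCoeff_one hθ hκ]) hbarrier
  rw [rpow_sub_one hht.ne'] at hderiv_le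
  have hg : 0 < h t ^ (1 / (N - 1)) := rpow_pos_of_pos hht _
  have hscaled : deriv h t / h t * (1 / (N - 1)) ≤ comparisonC K N (t - s) := by
    refine le_of_mul_le_mul_left ?_ (mul_pos hθ hg)
    linear_combination hderiv_le
  rwa [mul_one_div, div_le_iff₀ hN1, mul_comm] at hscaled

lemma KNConvexOn.deriv_div_le {K N a b t : ℝ} {h : ℝ → ℝ} (hN : 1 < N)
    (hKab : 0 < K → b - a ≤ π * √((N - 1) / K)) (hpos : ∀ x ∈ Ioo a b, 0 < h x)
    (hconv : KNConvexOn K N (Ioo a b) h) (ht : t ∈ Ioo a b) (hd : DifferentiableAt ℝ h t) :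
    deriv h t / h t ≤ (N - 1) * comparisonC K N (t - a) := by
  have hπ : ∀ θ < b - a, 0 < K → θ * √(K / (N - 1)) < π := fun θ hθ hK =>
    mul_sqrt_div_lt_pi (div_pos (by linarith) hK) (hθ.trans_le (hKab hK))
  have hlim : Tendsto (fun s => (N - 1) * comparisonC K N (t - s)) (𝓝[>] a)
      (𝓝 ((N - 1) * comparisonC K N (t - a))) :=
    (((continuousAt_comparisonC hN (sub_pos.2 ht.1) (hπ _ (by linarith [ht.2]))).tendsto.comp
      ((continuous_const.sub continuous_id).tendsto a)).const_mul _).mono_left nhdsWithin_le_nhds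
  refine ge_of_tendsto hlim ?_
  filter_upwards [Ioo_mem_nhdsGT ht.1] with s hs
  have hs' : s ∈ Ioo a b := ⟨hs.1, hs.2.trans ht.2⟩
  exact hconv.deriv_div_le_of_lt hN hs' ht hs.2 (hπ _ (by linarith [hs.1, ht.2]))
    (hpos s hs').le (hpos t ht) hd

theorem log_derivative_estimate_general (K N a b : ℝ) (hN : 1 < N)
    (hKab : 0 < K → b - a ≤ Real.pi * Real.sqrt ((N - 1) / K))
    (h : ℝ → ℝ) (hpos : ∀ t ∈ Set.Ioo a b, 0 < h t)
    (hconv : KNConvexOn K N (Set.Ioo a b) h) :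
    ∀ t ∈ Set.Ioo a b, DifferentiableAt ℝ h t →
      -(N - 1) * comparisonC K N (b - t) ≤ deriv h t / h t ∧
        deriv h t / h t ≤ (N - 1) * comparisonC K N (t - a) := by
  intro t ht hd
  refine ⟨?_, hconv.deriv_div_le hN hKab hpos ht hd⟩
  have hreflected := hconv.comp_neg
  rw [neg_Ioo] at hreflected
  have hbound := hreflected.deriv_div_le hN (by rwa [neg_sub_neg])
    (fun x hx => hpos (-x) ⟨lt_neg_of_lt_neg hx.2, neg_lt_of_neg_lt hx.1⟩)
    (t := -t) ⟨neg_lt_neg ht.2, neg_lt_neg ht.1⟩ (differentiableAt_iff_comp_neg.1 hd)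
  rw [deriv_comp_neg, neg_neg, neg_div, sub_neg_eq_add, neg_add_eq_sub] at hbound
  linarith

/-- Logarithmic derivative estimate for `(K,N)`-convex densities: if `h > 0` satisfies
the `(K,N)`-convexity inequality on `(a,b)` (with `b − a ≤ π√((N−1)/K)` if `K > 0`),
then at every differentiability point `t ∈ (a,b)`,
`−(N−1)·C_{K,N}(b−t) ≤ h'(t)/h(t) ≤ (N−1)·C_{K,N}(t−a)`. -/
theorem log_derivative_estimate (K N a b : ℝ) (hN : 1 < N) (hab : a < b)
    (hKab : 0 < K → b - a ≤ Real.pi * Real.sqrt ((N - 1) / K))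
    (h : ℝ → ℝ) (hpos : ∀ t ∈ Set.Ioo a b, 0 < h t)
    (hconv : KNConvexOn K N (Set.Ioo a b) h) :
    ∀ t ∈ Set.Ioo a b, DifferentiableAt ℝ h t →
      -(N - 1) * comparisonC K N (b - t) ≤ deriv h t / h t ∧
        deriv h t / h t ≤ (N - 1) * comparisonC K N (t - a) :=
  log_derivative_estimate_general K N a b hN hKab h hpos hconv
end
end

section
/- One-dimensional density estimate (Heintze–Karcher/Ketterer form): let K ∈ ℝ, N > 1, T > 0; if K > 0 assume additionally T ≤ π·√((N−1)/K). Let h : [0,T) → ℝ be positive, satisfy the (K,N)-convexity inequality on [0,T), and possess a right derivative h'₊(0) at 0 with h'₊(0) ≤ H₀ · h(0) for some H₀ ∈ ℝ. Then h(θ) ≤ J_{K,N,H₀}(θ) · h(0) for every θ ∈ [0,T). -/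
noncomputable section

/-- The model Jacobian `J_{K,N,H₀}(θ)`. -/
def modelJacobian (K N H₀ θ : ℝ) : ℝ :=
  if 0 < K then
    max (Real.cos (θ * Real.sqrt (K / (N - 1))) +
        H₀ / Real.sqrt (K * (N - 1)) * Real.sin (θ * Real.sqrt (K / (N - 1)))) 0 ^ (N - 1)
  else if K = 0 then max (1 + H₀ * θ / (N - 1)) 0 ^ (N - 1)
  else
    max (Real.cosh (θ * Real.sqrt (-K / (N - 1))) +
        H₀ / Real.sqrt (-K * (N - 1)) * Real.sinh (θ * Real.sqrt (-K / (N - 1)))) 0 ^ (N - 1)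

/-!
Write `u = h ^ (1/(N-1))` and `σ⁽ˡ⁾(θ) = S(l x)/S(x)`, where `x = θ a` and
`(S, C, a) = (sin, cos, √(K/(N-1)))`, `(id, 1, 1)` or `(sinh, cosh, √(-K/(N-1)))`.
The `(K,N)`-convexity inequality between `0` and `θ` says that
`l ↦ σ⁽¹⁻ˡ⁾ u(0) + σ⁽ˡ⁾ u(θ)` lies below `l ↦ u(l θ)` on `(0,1)`, with equality at `l = 0`.
Comparing right derivatives at `l = 0` gives `u(θ) ≤ u(0) C(x) + θ u'(0) S(x)/x`, and
`u'(0) = h'(0) u(0)/((N-1) h(0)) ≤ H₀ u(0)/(N-1)` turns the right side into `u(0)` times the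
bracket of `J`. That bracket is positive because `u(θ)` is, so raising to the power `N-1` ends
the proof.
-/

open Filter Set Topology

theorem HasDerivWithinAt.le_of_eventually_le_of_eq {f g : ℝ → ℝ} {f' g' a : ℝ}
    (hf : HasDerivWithinAt f f' (Ici a) a) (hg : HasDerivWithinAt g g' (Ici a) a)
    (hfg : f a = g a) (hle : ∀ᶠ x in 𝓝[>] a, f x ≤ g x) : f' ≤ g' := by
  rw [← hasDerivWithinAt_Ioi_iff_Ici,
    hasDerivWithinAt_iff_tendsto_slope' self_notMem_Ioi] at hf hg
  refine le_of_tendsto_of_tendsto hf hg ?_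
  filter_upwards [hle, self_mem_nhdsWithin] with x hx (hax : a < x)
  rw [slope_def_field, slope_def_field, hfg]
  gcongr

theorem le_of_eventually_sine_interpolation_le {S C φ : ℝ → ℝ} {x y v : ℝ}
    (hS : ∀ t, HasDerivAt S (C t) t) (hS0 : S 0 = 0) (hC0 : C 0 = 1)
    (hx : 0 < x) (hSx : 0 < S x) (hφ : HasDerivWithinAt φ v (Ici 0) 0)
    (hle : ∀ᶠ l in 𝓝[>] 0, S ((1 - l) * x) / S x * φ 0 + S (l * x) / S x * y ≤ φ l) :
    y ≤ φ 0 * C x + v / x * S x := by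
  have hleft : HasDerivAt (fun l => S ((1 - l) * x)) (-(C x * x)) 0 :=
    ((hS _).comp 0 (((hasDerivAt_id 0).const_sub 1).mul_const x)).congr_deriv (by simp)
  have hright : HasDerivAt (fun l => S (l * x)) x 0 :=
    ((hS _).comp 0 ((hasDerivAt_id 0).mul_const x)).congr_deriv (by simp [hC0])
  have hderiv := (((hleft.div_const (S x)).mul_const (φ 0)).add
    ((hright.div_const (S x)).mul_const y)).hasDerivWithinAt.le_of_eventually_le_of_eq hφ
    (by simp [hS0, hSx.ne']) hle
  rw [← sub_nonneg] at hderiv ⊢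
  have key := div_nonneg (mul_nonneg hderiv hSx.le) hx.le
  field_simp at key ⊢
  linarith

theorem le_max_rpow_mul_of_rpow_one_div_le {p x y m : ℝ} (hp : 0 < p) (hx : 0 < x)
    (hy : 0 < y) (h : x ^ (1 / p) ≤ y ^ (1 / p) * m) : x ≤ max m 0 ^ p * y := by
  have hm : 0 < m := pos_of_mul_pos_right ((Real.rpow_pos_of_pos hx _).trans_le h)
    (Real.rpow_nonneg hy.le _)
  rw [one_div, Real.rpow_inv_le_iff_of_pos hx.le (by positivity) hp] at h
  rwa [max_eq_left hm.le, mul_comm, ← Real.rpow_inv_rpow hy.le hp.ne',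
    ← Real.mul_rpow (by positivity) hm.le]

theorem le_max_rpow_mul_of_KNConvexOn {K N T H₀ d θ a : ℝ} {h S C : ℝ → ℝ} (hN : 1 < N)
    (hpos : ∀ t ∈ Ico (0 : ℝ) T, 0 < h t) (hconv : KNConvexOn K N (Ico 0 T) h)
    (hder : HasDerivWithinAt h d (Ici 0) 0) (hdH : d ≤ H₀ * h 0) (hθ : 0 < θ) (hθT : θ < T)
    (hS : ∀ t, HasDerivAt S (C t) t) (hS0 : S 0 = 0) (hC0 : C 0 = 1) (ha : 0 < a)
    (hSθ : 0 < S (θ * a))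
    (hσ : ∀ s, sigmaCoeff (K / (N - 1)) s θ = S (s * (θ * a)) / S (θ * a)) :
    h θ ≤ max (C (θ * a) + H₀ / ((N - 1) * a) * S (θ * a)) 0 ^ (N - 1) * h 0 := by
  have hp : 0 < N - 1 := sub_pos.2 hN
  have h0T : (0 : ℝ) ∈ Ico 0 T := ⟨le_rfl, hθ.trans hθT⟩
  have hθT' : θ ∈ Ico 0 T := ⟨hθ.le, hθT⟩
  have h0 : 0 < h 0 := hpos 0 h0T
  have hφ : HasDerivWithinAt (fun l => h (l * θ) ^ (1 / (N - 1)))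
      (d * (1 / (N - 1)) * h 0 ^ (1 / (N - 1) - 1) * θ) (Ici 0) 0 :=
    (hder.rpow_const (Or.inl h0.ne')).comp_of_eq 0 (hasDerivAt_mul_const θ).hasDerivWithinAt
      (fun l hl => mul_nonneg hl hθ.le) (zero_mul θ).symm
  have hle : ∀ᶠ l in 𝓝[>] 0, S ((1 - l) * (θ * a)) / S (θ * a) * h (0 * θ) ^ (1 / (N - 1)) +
      S (l * (θ * a)) / S (θ * a) * h θ ^ (1 / (N - 1)) ≤ h (l * θ) ^ (1 / (N - 1)) := by
    filter_upwards [Ioo_mem_nhdsGT one_pos] with l hl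
    simpa [hσ] using hconv 0 h0T θ hθT' hθ l (Ioo_subset_Icc_self hl)
  have hslope : d * (1 / (N - 1)) * h 0 ^ (1 / (N - 1) - 1) * θ / (θ * a) ≤
      h 0 ^ (1 / (N - 1)) * (H₀ / ((N - 1) * a)) := by
    have hdh : d / h 0 ≤ H₀ := (div_le_iff₀ h0).2 hdH
    calc d * (1 / (N - 1)) * h 0 ^ (1 / (N - 1) - 1) * θ / (θ * a)
        = d / h 0 * (h 0 ^ (1 / (N - 1)) / ((N - 1) * a)) := by
          rw [Real.rpow_sub_one h0.ne']
          field_simp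
      _ ≤ H₀ * (h 0 ^ (1 / (N - 1)) / ((N - 1) * a)) := by gcongr
      _ = h 0 ^ (1 / (N - 1)) * (H₀ / ((N - 1) * a)) := by ring
  refine le_max_rpow_mul_of_rpow_one_div_le hp (hpos θ hθT') h0 ?_
  calc h θ ^ (1 / (N - 1))
      ≤ h 0 ^ (1 / (N - 1)) * C (θ * a) +
          d * (1 / (N - 1)) * h 0 ^ (1 / (N - 1) - 1) * θ / (θ * a) * S (θ * a) := by
        simpa using le_of_eventually_sine_interpolation_le hS hS0 hC0 (mul_pos hθ ha) hSθ hφ hle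
    _ ≤ h 0 ^ (1 / (N - 1)) * C (θ * a) +
          h 0 ^ (1 / (N - 1)) * (H₀ / ((N - 1) * a)) * S (θ * a) := by
        gcongr
    _ = h 0 ^ (1 / (N - 1)) * (C (θ * a) + H₀ / ((N - 1) * a) * S (θ * a)) := by ring

theorem modelJacobian_zero_right (K N H₀ : ℝ) : modelJacobian K N H₀ 0 = 1 := by
  unfold modelJacobian
  split_ifs <;> simp

theorem Real.sqrt_mul_eq_mul_sqrt_div (c : ℝ) {p : ℝ} (hp : 0 < p) :
    √(c * p) = p * √(c / p) := by
  rw [show c * p = c / p * p ^ 2 by field_simp, Real.sqrt_mul' _ (sq_nonneg p),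
    Real.sqrt_sq hp.le, mul_comm]

theorem density_estimate_general (K N T H₀ : ℝ) (hN : 1 < N)
    (hKT : 0 < K → T ≤ Real.pi * Real.sqrt ((N - 1) / K))
    (h : ℝ → ℝ) (hpos : ∀ t ∈ Set.Ico (0 : ℝ) T, 0 < h t)
    (hconv : KNConvexOn K N (Set.Ico 0 T) h)
    (d : ℝ) (hder : HasDerivWithinAt h d (Set.Ici (0 : ℝ)) 0) (hdH : d ≤ H₀ * h 0) :
    ∀ θ ∈ Set.Ico (0 : ℝ) T, h θ ≤ modelJacobian K N H₀ θ * h 0 := by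
  rintro θ ⟨hθ0, hθT⟩
  rcases hθ0.eq_or_lt with rfl | hθ
  · rw [modelJacobian_zero_right, one_mul]
  have hp : 0 < N - 1 := sub_pos.2 hN
  have key := fun (S C : ℝ → ℝ) (a : ℝ) =>
    le_max_rpow_mul_of_KNConvexOn (S := S) (C := C) (a := a) hN hpos hconv hder hdH hθ hθT
  rcases lt_trichotomy K 0 with hK | rfl | hK
  · have hκ : K / (N - 1) < 0 := div_neg_of_neg_of_pos hK hp
    have ha : 0 < √(-K / (N - 1)) := Real.sqrt_pos.2 (by rw [neg_div]; linarith)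
    rw [modelJacobian, if_neg hK.not_gt, if_neg hK.ne, Real.sqrt_mul_eq_mul_sqrt_div _ hp]
    refine key Real.sinh Real.cosh _ Real.hasDerivAt_sinh Real.sinh_zero Real.cosh_zero ha
      (Real.sinh_pos_iff.2 (mul_pos hθ ha)) fun s => ?_
    rw [sigmaCoeff, if_neg hκ.not_gt, if_neg hκ.ne, neg_div, mul_assoc]
  · simpa [modelJacobian, div_mul_eq_mul_div] using
      key id (fun _ => 1) 1 hasDerivAt_id rfl rfl one_pos (by simpa using hθ)
        fun s => by simp [sigmaCoeff, hθ.ne']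
  · have hκ : 0 < K / (N - 1) := div_pos hK hp
    have ha : 0 < √(K / (N - 1)) := Real.sqrt_pos.2 hκ
    have hθa : θ * √(K / (N - 1)) < Real.pi := by
      have hTπ := hKT hK
      rw [← inv_div, Real.sqrt_inv, ← div_eq_mul_inv] at hTπ
      exact (lt_div_iff₀ ha).1 (hθT.trans_le hTπ)
    rw [modelJacobian, if_pos hK, Real.sqrt_mul_eq_mul_sqrt_div _ hp]
    refine key Real.sin Real.cos _ Real.hasDerivAt_sin Real.sin_zero Real.cos_zero ha
      (Real.sin_pos_of_pos_of_lt_pi (mul_pos hθ ha) hθa) fun s => ?_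
    rw [sigmaCoeff, if_pos hκ, mul_assoc]

/-- One-dimensional density estimate (Heintze–Karcher/Ketterer form): a positive
`(K,N)`-convex density `h` on `[0,T)` with right derivative at `0` bounded by
`H₀ · h(0)` satisfies `h(θ) ≤ J_{K,N,H₀}(θ) · h(0)` throughout `[0,T)`. -/
theorem density_estimate (K N T H₀ : ℝ) (hN : 1 < N) (hT : 0 < T)
    (hKT : 0 < K → T ≤ Real.pi * Real.sqrt ((N - 1) / K))
    (h : ℝ → ℝ) (hpos : ∀ t ∈ Set.Ico (0 : ℝ) T, 0 < h t)
    (hconv : KNConvexOn K N (Set.Ico 0 T) h)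
    (d : ℝ) (hder : HasDerivWithinAt h d (Set.Ici (0 : ℝ)) 0) (hdH : d ≤ H₀ * h 0) :
    ∀ θ ∈ Set.Ico (0 : ℝ) T, h θ ≤ modelJacobian K N H₀ θ * h 0 :=
  density_estimate_general K N T H₀ hN hKT h hpos hconv d hder hdH
end
end
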